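/- arXiv:2301.11224 — 4 statements merged into one kernel-verified Lean document; each statement's English description precedes it below -/
import Mathlib

section
/- Let G be a profinite group, H a closed subgroup of G, and φ : H → A a continuous homomorphism to a finite group A. Then there exists an open subgroup U of G containing H and a continuous homomorphism ψ : U → A with ψ restricted to H equal to φ. -/
/-!
Since `A` is discrete, the kernel of `φ` is open in `H`, and in a profinite group the open normal
subgroups form a basis of neighbourhoods of `1`; so some open normal subgroup `N` of `G` meets `H`
inside `ker φ`. Then `φ` factors through `H / (H ⊓ N) ≃* (H ⊔ N) / N`, which extends it to the
open subgroup `H ⊔ N`, continuously because the extension kills the open subgroup `N`.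
-/

section

variable {G A : Type*} [Group G] [TopologicalSpace G] [IsTopologicalGroup G] [Group A]

theorem MonoidHom.continuous_of_isOpen_ker [TopologicalSpace A] [DiscreteTopology A]
    (f : G →* A) (hf : IsOpen (f.ker : Set G)) : Continuous f := by
  refine continuous_of_continuousAt_one f ?_
  rw [ContinuousAt, nhds_discrete A, map_one, Filter.tendsto_pure]
  exact hf.mem_nhds f.ker.one_mem

theorem ProfiniteGrp.exists_openNormalSubgroup_subgroupOf_le_ker [CompactSpace G]
    [TotallyDisconnectedSpace G] [TopologicalSpace A] [DiscreteTopology A] {H : Subgroup G}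
    (φ : H →* A) (hφ : Continuous φ) :
    ∃ N : OpenNormalSubgroup G, (N : Subgroup G).subgroupOf H ≤ φ.ker := by
  obtain ⟨W, hW, hWker⟩ := isOpen_induced_iff.mp ((isOpen_discrete {1}).preimage hφ)
  have hW1 : (1 : G) ∈ W := show (1 : H) ∈ Subtype.val ⁻¹' W by simp [hWker]
  obtain ⟨N, hNW⟩ := ProfiniteGrp.exist_openNormalSubgroup_sub_open_nhds_of_one hW hW1
  refine ⟨N, fun h hh ↦ ?_⟩
  have : h ∈ Subtype.val ⁻¹' W := hNW hh
  rwa [hWker] at this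

end

namespace MonoidHom

variable {G A : Type*} [Group G] [Group A] {H N : Subgroup G} [N.Normal]

noncomputable def extendSupNormal (φ : H →* A) (hφ : N.subgroupOf H ≤ φ.ker) :
    ↥(H ⊔ N) →* A :=
  (QuotientGroup.lift _ φ hφ).comp <|
    (QuotientGroup.quotientInfEquivProdNormalQuotient H N).symm.toMonoidHom.comp
      (QuotientGroup.mk' _)

theorem extendSupNormal_apply_of_mem (φ : H →* A) (hφ : N.subgroupOf H ≤ φ.ker) {g : G}
    (hgH : g ∈ H) (hg : g ∈ H ⊔ N) : extendSupNormal φ hφ ⟨g, hg⟩ = φ ⟨g, hgH⟩ := by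
  have he : (QuotientGroup.quotientInfEquivProdNormalQuotient H N).symm
      (QuotientGroup.mk (⟨g, hg⟩ : ↥(H ⊔ N))) = QuotientGroup.mk (⟨g, hgH⟩ : H) :=
    (MulEquiv.symm_apply_eq _).mpr rfl
  simp [extendSupNormal, he]

theorem subgroupOf_sup_le_ker_extendSupNormal (φ : H →* A) (hφ : N.subgroupOf H ≤ φ.ker) :
    N.subgroupOf (H ⊔ N) ≤ (extendSupNormal φ hφ).ker := fun u hu ↦ by
  simp [extendSupNormal, (QuotientGroup.eq_one_iff u).mpr hu]

end MonoidHom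

theorem lift_from_closed_to_open_general
    {G : Type*} [Group G] [TopologicalSpace G] [IsTopologicalGroup G]
    [CompactSpace G] [TotallyDisconnectedSpace G]
    {A : Type*} [Group A] [TopologicalSpace A] [DiscreteTopology A]
    (H : Subgroup G)
    (φ : H →* A) (hφ : Continuous φ) :
    ∃ U : Subgroup G, IsOpen (U : Set G) ∧ H ≤ U ∧
      ∃ ψ : U →* A, Continuous ψ ∧
        ∀ (g : G) (hgH : g ∈ H) (hgU : g ∈ U), ψ ⟨g, hgU⟩ = φ ⟨g, hgH⟩ := by
  obtain ⟨N, hN⟩ := ProfiniteGrp.exists_openNormalSubgroup_subgroupOf_le_ker φ hφ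
  have hNU : IsOpen ((N : Subgroup G).subgroupOf (H ⊔ N) : Set ↥(H ⊔ N)) :=
    N.isOpen'.preimage continuous_subtype_val
  refine ⟨H ⊔ N, Subgroup.isOpen_mono le_sup_right N.isOpen', le_sup_left,
    φ.extendSupNormal hN, ?_, fun g hgH hgU ↦ φ.extendSupNormal_apply_of_mem hN hgH hgU⟩
  exact MonoidHom.continuous_of_isOpen_ker _ <|
    Subgroup.isOpen_mono (φ.subgroupOf_sup_le_ker_extendSupNormal hN) hNU

/-- A continuous homomorphism from a closed subgroup of a profinite group to a
finite group extends to an open subgroup. -/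
theorem lift_from_closed_to_open
    {G : Type*} [Group G] [TopologicalSpace G] [IsTopologicalGroup G]
    [CompactSpace G] [T2Space G] [TotallyDisconnectedSpace G]
    {A : Type*} [Group A] [Finite A] [TopologicalSpace A] [DiscreteTopology A]
    (H : Subgroup G) (hH : IsClosed (H : Set G))
    (φ : H →* A) (hφ : Continuous φ) :
    ∃ U : Subgroup G, IsOpen (U : Set G) ∧ H ≤ U ∧
      ∃ ψ : U →* A, Continuous ψ ∧
        ∀ (g : G) (hgH : g ∈ H) (hgU : g ∈ U), ψ ⟨g, hgU⟩ = φ ⟨g, hgH⟩ :=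
  lift_from_closed_to_open_general H φ hφ
end

section
/- Let G be a profinite group and U a finite-index subgroup of G. Then U equals the union of all closed subgroups of G that are topologically finitely generated and contained in U. -/
/-!
Only one-generated subgroups are needed: for `x ∈ U` the closed subgroup topologically generated
by `x` already lies in `U`. If `m` is the index of the normal core of `U`, every `m`-th power lies
in `U`, and writing `n = (n % m) + m * (n / m)` puts every `x ^ n` in the finite union of
translates `x ^ i • {g ^ m}`, `0 ≤ i < m`. By compactness the set of `m`-th powers is closed, so
this union is a closed subset of `U` containing `zpowers x`, hence also its closure.
-/

open Pointwise

theorem isClosed_range_pow {M : Type*} [Monoid M] [TopologicalSpace M] [ContinuousMul M]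
    [CompactSpace M] [T2Space M] (m : ℕ) : IsClosed (Set.range fun g : M => g ^ m) :=
  (isCompact_range (continuous_pow m)).isClosed

theorem zpow_mem_zpow_smul_range_pow {G : Type*} [Group G] (x : G) {m : ℕ} (hm : m ≠ 0)
    (n : ℤ) : x ^ n ∈ ⋃ i ∈ Set.Ico (0 : ℤ) m, x ^ i • Set.range fun g : G => g ^ m := by
  have hm' : (0 : ℤ) < m := by exact_mod_cast Nat.pos_of_ne_zero hm
  refine Set.mem_biUnion ⟨Int.emod_nonneg n hm'.ne', Int.emod_lt_of_pos n hm'⟩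
    ⟨(x ^ (n / m)) ^ m, ⟨x ^ (n / m), rfl⟩, ?_⟩
  show x ^ (n % m) * (x ^ (n / m)) ^ m = x ^ n
  rw [← zpow_natCast, ← zpow_mul, ← zpow_add, mul_comm, Int.emod_add_mul_ediv]

theorem topologicalClosure_zpowers_subset {G : Type*} [Group G] [TopologicalSpace G]
    [IsTopologicalGroup G] [CompactSpace G] [T2Space G] (x : G) {m : ℕ} (hm : m ≠ 0) :
    ((Subgroup.zpowers x).topologicalClosure : Set G) ⊆
      ⋃ i ∈ Set.Ico (0 : ℤ) m, x ^ i • Set.range fun g : G => g ^ m := by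
  refine closure_minimal ?_ <| (Set.finite_Ico _ _).isClosed_biUnion fun i _ =>
    (isClosed_range_pow m).smul (x ^ i)
  rintro _ ⟨n, rfl⟩
  exact zpow_mem_zpow_smul_range_pow x hm n

theorem Subgroup.topologicalClosure_zpowers_le {G : Type*} [Group G] [TopologicalSpace G]
    [IsTopologicalGroup G] [CompactSpace G] [T2Space G] {U : Subgroup G} [U.FiniteIndex]
    {x : G} (hx : x ∈ U) : (zpowers x).topologicalClosure ≤ U := by
  intro g hg
  have hm : U.normalCore.index ≠ 0 := FiniteIndex.index_ne_zero
  obtain ⟨i, -, _, ⟨h, rfl⟩, rfl⟩ :=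
    Set.mem_iUnion₂.mp (topologicalClosure_zpowers_subset x hm hg)
  exact U.mul_mem (U.zpow_mem hx i) (U.normalCore_le (U.normalCore.pow_index_mem h))

theorem finiteIndex_subgroup_eq_union_of_fg_closed_general
    {G : Type*} [Group G] [TopologicalSpace G] [IsTopologicalGroup G]
    [CompactSpace G] [T2Space G]
    (U : Subgroup G) (hU : U.FiniteIndex) (x : G) :
    x ∈ U ↔ ∃ H : Subgroup G, IsClosed (H : Set G) ∧
      (∃ S : Finset G, (Subgroup.closure (S : Set G)).topologicalClosure = H) ∧
      H ≤ U ∧ x ∈ H := by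
  refine ⟨fun hx => ?_, fun ⟨H, _, _, hHU, hxH⟩ => hHU hxH⟩
  refine ⟨(Subgroup.zpowers x).topologicalClosure, Subgroup.isClosed_topologicalClosure _,
    ⟨{x}, by rw [Finset.coe_singleton, Subgroup.zpowers_eq_closure]⟩,
    Subgroup.topologicalClosure_zpowers_le hx, ?_⟩
  exact Subgroup.le_topologicalClosure _ (Subgroup.mem_zpowers x)

/-- A finite-index subgroup of a profinite group is the union of the topologically
finitely generated closed subgroups contained in it. -/
theorem finiteIndex_subgroup_eq_union_of_fg_closed
    {G : Type*} [Group G] [TopologicalSpace G] [IsTopologicalGroup G]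
    [CompactSpace G] [T2Space G] [TotallyDisconnectedSpace G]
    (U : Subgroup G) (hU : U.FiniteIndex) (x : G) :
    x ∈ U ↔ ∃ H : Subgroup G, IsClosed (H : Set G) ∧
      (∃ S : Finset G, (Subgroup.closure (S : Set G)).topologicalClosure = H) ∧
      H ≤ U ∧ x ∈ H :=
  finiteIndex_subgroup_eq_union_of_fg_closed_general U hU x
end

section
/- Let G be a profinite group and suppose that for some surjection of finite groups α : B → A, every continuous homomorphism from every open subgroup of G to A lifts to a continuous homomorphism to B through α. Then the same lifting property holds for every closed subgroup of G: every continuous homomorphism from a closed subgroup H of G to A lifts to a continuous homomorphism H → B through α. -/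
/-!
The kernel of a continuous `φ : H → A` is open in `H`, so in the profinite group `G` it contains
`N ∩ H` for some open normal subgroup `N`. By the second isomorphism theorem
`(H ⊔ N) ⧸ N ≃* H ⧸ (N ∩ H)`, `φ` then extends to the open subgroup `H ⊔ N`, continuously
because the extension kills `N`. Lifting this extension through `α` and restricting back to `H`
gives the lift of `φ`.
-/

theorem MonoidHom.continuous_of_isOpen_le_ker {G A : Type*} [Group G] [TopologicalSpace G]
    [IsTopologicalGroup G] [Monoid A] [TopologicalSpace A] [ContinuousMul A] (f : G →* A)
    {K : Subgroup G} (hK : IsOpen (K : Set G)) (hKf : K ≤ f.ker) : Continuous f :=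
  continuous_of_continuousAt_one f <| tendsto_nhds_of_eventually_eq <| by
    filter_upwards [hK.mem_nhds K.one_mem] with x hx
    rw [hKf hx, map_one]

theorem Subgroup.exists_extension_to_sup_normal {G A : Type*} [Group G] [Group A]
    (H N : Subgroup G) [N.Normal] (φ : H →* A) (hφ : N.subgroupOf H ≤ φ.ker) :
    ∃ Φ : (H ⊔ N : Subgroup G) →* A,
      N.subgroupOf (H ⊔ N) ≤ Φ.ker ∧ Φ.comp (Subgroup.inclusion le_sup_left) = φ := by
  refine ⟨(QuotientGroup.lift _ φ hφ).comp
    ((QuotientGroup.quotientInfEquivProdNormalQuotient H N).symm.toMonoidHom.comp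
      (QuotientGroup.mk' _)), fun x hx => ?_, ?_⟩
  · simp [(QuotientGroup.eq_one_iff x).mpr hx]
  · ext h
    have hmk : QuotientGroup.quotientInfEquivProdNormalQuotient H N (h : H ⧸ N.subgroupOf H) =
        (Subgroup.inclusion le_sup_left h : (H ⊔ N : Subgroup G)) := rfl
    simp [← hmk]

namespace ProfiniteGrp

variable {G A : Type*} [Group G] [TopologicalSpace G] [IsTopologicalGroup G] [CompactSpace G]
  [TotallyDisconnectedSpace G] [Group A] [TopologicalSpace A] [DiscreteTopology A]
  {H : Subgroup G}

theorem exists_openNormalSubgroup_subgroupOf_le_ker_s14 (φ : H →* A) (hφ : Continuous φ) :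
    ∃ N : OpenNormalSubgroup G, N.toSubgroup.subgroupOf H ≤ φ.ker := by
  obtain ⟨W, hW, hWker⟩ := isOpen_induced_iff.mp (hφ.isOpen_preimage {1} (isOpen_discrete _))
  have h1W : (1 : G) ∈ W := show (1 : H) ∈ Subtype.val ⁻¹' W by simp [hWker]
  obtain ⟨N, hNW⟩ := exist_openNormalSubgroup_sub_open_nhds_of_one hW h1W
  refine ⟨N, fun x hx => ?_⟩
  have hxW : x ∈ Subtype.val ⁻¹' W := hNW hx
  simpa [hWker] using hxW

theorem exists_open_extension (φ : H →* A) (hφ : Continuous φ) :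
    ∃ U : Subgroup G, IsOpen (U : Set G) ∧ ∃ (hHU : H ≤ U) (Φ : U →* A),
      Continuous Φ ∧ Φ.comp (Subgroup.inclusion hHU) = φ := by
  obtain ⟨N, hN⟩ := exists_openNormalSubgroup_subgroupOf_le_ker_s14 φ hφ
  obtain ⟨Φ, hΦ, hΦφ⟩ := H.exists_extension_to_sup_normal N.toSubgroup φ hN
  exact ⟨H ⊔ N.toSubgroup, Subgroup.isOpen_mono le_sup_right N.isOpen, le_sup_left, Φ,
    Φ.continuous_of_isOpen_le_ker (N.isOpen.preimage continuous_subtype_val) hΦ, hΦφ⟩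

end ProfiniteGrp

theorem lifting_open_to_closed_general
    {G : Type*} [Group G] [TopologicalSpace G] [IsTopologicalGroup G]
    [CompactSpace G] [TotallyDisconnectedSpace G]
    {A B : Type*} [Group A] [TopologicalSpace A] [DiscreteTopology A]
    [Group B] [TopologicalSpace B]
    (α : B →* A)
    (hopen : ∀ U : Subgroup G, IsOpen (U : Set G) →
      ∀ φ : U →* A, Continuous φ → ∃ ψ : U →* B, Continuous ψ ∧ α.comp ψ = φ) :
    ∀ H : Subgroup G, IsClosed (H : Set G) →
      ∀ φ : H →* A, Continuous φ → ∃ ψ : H →* B, Continuous ψ ∧ α.comp ψ = φ := by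
  intro H _ φ hφ
  obtain ⟨U, hU, hHU, Φ, hΦ, rfl⟩ := ProfiniteGrp.exists_open_extension φ hφ
  obtain ⟨ψ, hψ, hαψ⟩ := hopen U hU Φ hΦ
  refine ⟨ψ.comp (Subgroup.inclusion hHU), hψ.comp (continuous_subtype_val.subtype_mk _), ?_⟩
  rw [← MonoidHom.comp_assoc, hαψ]

/-- If every continuous homomorphism from every open subgroup of a profinite group `G`
to a finite group `A` lifts continuously through a surjection `α : B → A`, then the same
holds for every closed subgroup of `G`. -/
theorem lifting_open_to_closed
    {G : Type*} [Group G] [TopologicalSpace G] [IsTopologicalGroup G]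
    [CompactSpace G] [T2Space G] [TotallyDisconnectedSpace G]
    {A B : Type*} [Group A] [Finite A] [TopologicalSpace A] [DiscreteTopology A]
    [Group B] [Finite B] [TopologicalSpace B] [DiscreteTopology B]
    (α : B →* A) (hα : Function.Surjective α)
    (hopen : ∀ U : Subgroup G, IsOpen (U : Set G) →
      ∀ φ : U →* A, Continuous φ → ∃ ψ : U →* B, Continuous ψ ∧ α.comp ψ = φ) :
    ∀ H : Subgroup G, IsClosed (H : Set G) →
      ∀ φ : H →* A, Continuous φ → ∃ ψ : H →* B, Continuous ψ ∧ α.comp ψ = φ :=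
  lifting_open_to_closed_general α hopen
end

section
/- Let G be an abstract group, A a finite abelian group regarded as a trivial module, and 1 → A → C → G → 1 an extension of abstract groups such that C is residually finite and the profinite topology of C induces the full topology on A (i.e., for every subgroup A' ≤ A there is a finite-index subgroup of C meeting A in A'). Then applying profinite completion yields an exact sequence 1 → A → Ĉ → Ĝ → 1. -/
/-- `i : G →* Ghat` exhibits the profinite group `Ghat` as the profinite completion
of the abstract group `G`: every homomorphism from `G` to a finite (discrete) group
factors uniquely through a continuous homomorphism from `Ghat`. -/
def IsProfiniteCompletion {G : Type*} [Group G] {Ghat : Type*} [Group Ghat]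
    [TopologicalSpace Ghat] [IsTopologicalGroup Ghat] [CompactSpace Ghat]
    [T2Space Ghat] [TotallyDisconnectedSpace Ghat] (i : G →* Ghat) : Prop :=
  ∀ (A : Type) [Group A] [Finite A] [TopologicalSpace A] [DiscreteTopology A]
    (f : G →* A), ∃! fhat : Ghat →* A, Continuous fhat ∧ fhat.comp i = f

/-!
The universal property forces a continuous map `q` from `Ĝ` to a finite group to take its values
in `q (i G)`: lift `G → q (i G)` and compare with `q`. So `i : G → Ĝ` has dense image, and `π̂`,
whose image is compact and contains `i G`, is onto. The image `K` of `A` in `Ĉ` is finite, hence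
closed, and normal by density. A point outside `K` lies outside some open normal `M ⊇ K`; as
`Ĉ → Ĉ ⧸ M` kills `A`, it factors through `G`, hence through `π̂`, so `ker π̂ ≤ M`. Residual
finiteness makes `C`, and so `A`, embed in `Ĉ`.
-/

theorem Subgroup.normal_map_of_denseRange {C P : Type*} [Group C] [Group P] [TopologicalSpace P]
    [IsTopologicalGroup P] {f : C →* P} (hf : DenseRange f) {H : Subgroup C} [hH : H.Normal]
    (hclosed : IsClosed (H.map f : Set P)) : (H.map f).Normal := by
  refine ⟨fun k hk y => hf.induction_on y (hclosed.preimage (by fun_prop)) fun c => ?_⟩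
  obtain ⟨h, hh, rfl⟩ := hk
  exact ⟨c * h * c⁻¹, hH.conj_mem h hh c, by simp⟩

theorem ProfiniteGrp.exists_openNormalSubgroup_le_of_notMem {P : Type*} [Group P]
    [TopologicalSpace P] [IsTopologicalGroup P] [CompactSpace P] [TotallyDisconnectedSpace P]
    {K : Subgroup P} [K.Normal] (hK : IsClosed (K : Set P)) {x : P} (hx : x ∉ K) :
    ∃ M : OpenNormalSubgroup P, K ≤ M.toSubgroup ∧ x ∉ M.toSubgroup := by
  obtain ⟨N, hN⟩ := ProfiniteGrp.exist_openNormalSubgroup_sub_open_nhds_of_one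
    (hK.isOpen_compl.preimage (continuous_const_mul x)) (by simpa using hx)
  refine ⟨{ toSubgroup := K ⊔ N.toSubgroup,
            isOpen' := Subgroup.isOpen_mono le_sup_right N.isOpen' }, le_sup_left, ?_⟩
  intro hxM
  obtain ⟨k, hk, n, hn, rfl⟩ := Subgroup.mem_sup_of_normal_left.1 hxM
  exact hN (N.toSubgroup.inv_mem hn) (by simpa using hk)

namespace IsProfiniteCompletion

section Universal

variable {G : Type*} [Group G] {Ghat : Type*} [Group Ghat]
    [TopologicalSpace Ghat] [IsTopologicalGroup Ghat] [CompactSpace Ghat]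
    [T2Space Ghat] [TotallyDisconnectedSpace Ghat] {i : G →* Ghat}

/-- The universal property in `IsProfiniteCompletion` only quantifies over finite groups in
`Type`; it transfers to every universe through `Shrink`. -/
theorem existsUnique_lift (hi : IsProfiniteCompletion i) (Q : Type*) [Group Q] [Finite Q]
    [TopologicalSpace Q] [DiscreteTopology Q] (f : G →* Q) :
    ∃! F : Ghat →* Q, Continuous F ∧ F.comp i = f := by
  let e : Shrink.{0} Q ≃* Q := Shrink.mulEquiv
  let : TopologicalSpace (Shrink.{0} Q) := ⊥
  have : DiscreteTopology (Shrink.{0} Q) := ⟨rfl⟩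
  have : Finite (Shrink.{0} Q) := .of_equiv Q e.symm.toEquiv
  obtain ⟨F, ⟨hFc, hFi⟩, hFu⟩ := hi (Shrink.{0} Q) (e.symm.toMonoidHom.comp f)
  refine ⟨e.toMonoidHom.comp F, ⟨(continuous_of_discreteTopology (f := e)).comp hFc, ?_⟩, ?_⟩
  · rw [MonoidHom.comp_assoc, hFi]
    ext
    simp
  · rintro F' ⟨hF'c, hF'i⟩
    have hF' : e.symm.toMonoidHom.comp F' = F :=
      hFu _ ⟨(continuous_of_discreteTopology (f := e.symm)).comp hF'c,
        by rw [MonoidHom.comp_assoc, hF'i]⟩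
    rw [← hF']
    ext
    simp

theorem range_comp_eq (hi : IsProfiniteCompletion i) {Q : Type*} [Group Q] [Finite Q]
    [TopologicalSpace Q] [DiscreteTopology Q] {q : Ghat →* Q} (hq : Continuous q) :
    (q.comp i).range = q.range := by
  set R := (q.comp i).range
  obtain ⟨F, ⟨hFc, hFi⟩, -⟩ := hi.existsUnique_lift R (q.comp i).rangeRestrict
  have hq_eq : R.subtype.comp F = q :=
    (hi.existsUnique_lift Q (q.comp i)).unique
      ⟨continuous_subtype_val.comp hFc,
        by rw [MonoidHom.comp_assoc, hFi, MonoidHom.subtype_comp_rangeRestrict]⟩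
      ⟨hq, rfl⟩
  refine le_antisymm (fun _ ⟨g, hg⟩ => ⟨i g, hg⟩) fun _ ⟨x, hx⟩ => ?_
  rw [← hx, ← hq_eq]
  exact (F x).2

theorem denseRange (hi : IsProfiniteCompletion i) : DenseRange i := by
  refine dense_iff_inter_open.2 fun U hU ⟨x, hx⟩ => ?_
  obtain ⟨N, hN⟩ := ProfiniteGrp.exist_openNormalSubgroup_sub_open_nhds_of_one
    (hU.preimage (continuous_const_mul x)) (by simpa using hx)
  obtain ⟨g, hg⟩ : QuotientGroup.mk' N.toSubgroup x ∈
      ((QuotientGroup.mk' N.toSubgroup).comp i).range := by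
    rw [hi.range_comp_eq QuotientGroup.continuous_mk]
    exact ⟨x, rfl⟩
  have hxg : x⁻¹ * i g ∈ N.toSubgroup := QuotientGroup.eq.1 hg.symm
  exact ⟨i g, by simpa using hN hxg, g, rfl⟩

theorem injective_of_residuallyFinite (hi : IsProfiniteCompletion i)
    (hG : ∀ g : G, g ≠ 1 → ∃ N : Subgroup G, N.Normal ∧ N.FiniteIndex ∧ g ∉ N) :
    Function.Injective i := by
  refine (injective_iff_map_eq_one i).2 fun g hg => by_contra fun hne => ?_
  obtain ⟨N, hN, hNfin, hgN⟩ := hG g hne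
  let : TopologicalSpace (G ⧸ N) := ⊥
  have : DiscreteTopology (G ⧸ N) := ⟨rfl⟩
  obtain ⟨F, ⟨-, hF⟩, -⟩ := hi.existsUnique_lift (G ⧸ N) (QuotientGroup.mk' N)
  apply hgN
  rw [← QuotientGroup.eq_one_iff, ← QuotientGroup.mk'_apply, ← hF, MonoidHom.comp_apply, hg,
    map_one]

end Universal

theorem surjective_of_comp_eq {C G : Type*} [Group C] [Group G] {π : C →* G}
    {Chat : Type*} [Group Chat] [TopologicalSpace Chat] [CompactSpace Chat]
    {Ghat : Type*} [Group Ghat] [TopologicalSpace Ghat] [IsTopologicalGroup Ghat]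
    [CompactSpace Ghat] [T2Space Ghat] [TotallyDisconnectedSpace Ghat]
    {iC : C →* Chat} {iG : G →* Ghat} {πhat : Chat →* Ghat}
    (hiG : IsProfiniteCompletion iG) (hπ : Function.Surjective π)
    (hπhat_cont : Continuous πhat) (hπhat : πhat.comp iC = iG.comp π) :
    Function.Surjective πhat := by
  have hdense : DenseRange πhat := hiG.denseRange.mono <| by
    rintro _ ⟨g, rfl⟩
    obtain ⟨c, rfl⟩ := hπ g
    exact ⟨iC c, DFunLike.congr_fun hπhat c⟩
  rw [← Set.range_eq_univ, ← (isCompact_range hπhat_cont).isClosed.closure_eq,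
    hdense.closure_range]

section CompletionOfQuotient

variable {C G : Type*} [Group C] [Group G] {π : C →* G}
    {Chat : Type*} [Group Chat] [TopologicalSpace Chat] [IsTopologicalGroup Chat]
    [CompactSpace Chat] [T2Space Chat] [TotallyDisconnectedSpace Chat]
    {Ghat : Type*} [Group Ghat] [TopologicalSpace Ghat] [IsTopologicalGroup Ghat]
    [CompactSpace Ghat] [T2Space Ghat] [TotallyDisconnectedSpace Ghat]
    {iC : C →* Chat} {iG : G →* Ghat} {πhat : Chat →* Ghat}

theorem ker_le_of_map_ker_le (hiC : IsProfiniteCompletion iC) (hiG : IsProfiniteCompletion iG)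
    (hπ : Function.Surjective π) (hπhat_cont : Continuous πhat)
    (hπhat : πhat.comp iC = iG.comp π) {M : OpenNormalSubgroup Chat}
    (hM : π.ker.map iC ≤ M.toSubgroup) : πhat.ker ≤ M.toSubgroup := by
  set q := QuotientGroup.mk' M.toSubgroup
  let g : G →* Chat ⧸ M.toSubgroup := π.liftOfSurjective hπ
    ⟨q.comp iC, fun c hc => by simpa [q] using hM ⟨c, hc, rfl⟩⟩
  have hg : g.comp π = q.comp iC := π.liftOfRightInverse_comp _ _ _
  obtain ⟨F, ⟨hFc, hF⟩, -⟩ := hiG.existsUnique_lift _ g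
  have hFq : F.comp πhat = q :=
    (hiC.existsUnique_lift _ (q.comp iC)).unique
      ⟨hFc.comp hπhat_cont, by rw [MonoidHom.comp_assoc, hπhat, ← MonoidHom.comp_assoc, hF, hg]⟩
      ⟨QuotientGroup.continuous_mk, rfl⟩
  intro x hx
  have hqx : q x = 1 := by rw [← hFq, MonoidHom.comp_apply, MonoidHom.mem_ker.1 hx, map_one]
  exact (QuotientGroup.eq_one_iff x).1 hqx

theorem ker_eq_map_ker (hiC : IsProfiniteCompletion iC) (hiG : IsProfiniteCompletion iG)
    (hπ : Function.Surjective π) (hπhat_cont : Continuous πhat)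
    (hπhat : πhat.comp iC = iG.comp π) (hclosed : IsClosed (π.ker.map iC : Set Chat)) :
    πhat.ker = π.ker.map iC := by
  have : (π.ker.map iC).Normal := Subgroup.normal_map_of_denseRange hiC.denseRange hclosed
  refine le_antisymm (fun x hx => by_contra fun hxK => ?_) ?_
  · obtain ⟨M, hKM, hxM⟩ := ProfiniteGrp.exists_openNormalSubgroup_le_of_notMem hclosed hxK
    exact hxM (ker_le_of_map_ker_le hiC hiG hπ hπhat_cont hπhat hKM hx)
  · rintro _ ⟨c, hc, rfl⟩
    rw [MonoidHom.mem_ker, ← MonoidHom.comp_apply, hπhat, MonoidHom.comp_apply,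
      MonoidHom.mem_ker.1 hc, map_one]

end CompletionOfQuotient

end IsProfiniteCompletion

theorem completion_of_extension_exact_general
    {A C G : Type*} [CommGroup A] [Finite A] [Group C] [Group G]
    (ι : A →* C) (π : C →* G)
    (hι : Function.Injective ι) (hπ : Function.Surjective π)
    (hexact : π.ker = ι.range)
    (hres : ∀ c : C, c ≠ 1 → ∃ N : Subgroup C, N.Normal ∧ N.FiniteIndex ∧ c ∉ N)
    {Chat : Type*} [Group Chat] [TopologicalSpace Chat] [IsTopologicalGroup Chat]
    [CompactSpace Chat] [T2Space Chat] [TotallyDisconnectedSpace Chat]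
    {Ghat : Type*} [Group Ghat] [TopologicalSpace Ghat] [IsTopologicalGroup Ghat]
    [CompactSpace Ghat] [T2Space Ghat] [TotallyDisconnectedSpace Ghat]
    (iC : C →* Chat) (hiC : IsProfiniteCompletion iC)
    (iG : G →* Ghat) (hiG : IsProfiniteCompletion iG)
    (πhat : Chat →* Ghat) (hπhatcont : Continuous πhat)
    (hπhat : πhat.comp iC = iG.comp π) :
    Function.Injective (iC.comp ι) ∧ Function.Surjective πhat ∧
      πhat.ker = (iC.comp ι).range := by
  have himage : π.ker.map iC = (iC.comp ι).range := by rw [hexact, MonoidHom.map_range]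
  have hclosed : IsClosed (π.ker.map iC : Set Chat) :=
    himage ▸ (Set.finite_range (iC.comp ι)).isClosed
  refine ⟨(hiC.injective_of_residuallyFinite hres).comp hι,
    hiG.surjective_of_comp_eq hπ hπhatcont hπhat, ?_⟩
  rw [← himage]
  exact hiC.ker_eq_map_ker hiG hπ hπhatcont hπhat hclosed

/-- For an extension `1 → A → C → G → 1` with `A` finite abelian, `C` residually finite
and the profinite topology of `C` inducing the full topology on `A`, profinite completion
yields an exact sequence `1 → A → Ĉ → Ĝ → 1`. -/
theorem completion_of_extension_exact
    {A C G : Type*} [CommGroup A] [Finite A] [Group C] [Group G]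
    (ι : A →* C) (π : C →* G)
    (hι : Function.Injective ι) (hπ : Function.Surjective π)
    (hexact : π.ker = ι.range)
    (hres : ∀ c : C, c ≠ 1 → ∃ N : Subgroup C, N.Normal ∧ N.FiniteIndex ∧ c ∉ N)
    (hind : ∀ A' : Subgroup A, ∃ D : Subgroup C, D.FiniteIndex ∧ Subgroup.comap ι D = A')
    {Chat : Type*} [Group Chat] [TopologicalSpace Chat] [IsTopologicalGroup Chat]
    [CompactSpace Chat] [T2Space Chat] [TotallyDisconnectedSpace Chat]
    {Ghat : Type*} [Group Ghat] [TopologicalSpace Ghat] [IsTopologicalGroup Ghat]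
    [CompactSpace Ghat] [T2Space Ghat] [TotallyDisconnectedSpace Ghat]
    (iC : C →* Chat) (hiC : IsProfiniteCompletion iC)
    (iG : G →* Ghat) (hiG : IsProfiniteCompletion iG)
    (πhat : Chat →* Ghat) (hπhatcont : Continuous πhat)
    (hπhat : πhat.comp iC = iG.comp π) :
    Function.Injective (iC.comp ι) ∧ Function.Surjective πhat ∧
      πhat.ker = (iC.comp ι).range :=
  completion_of_extension_exact_general ι π hι hπ hexact hres iC hiC iG hiG πhat hπhatcont hπhat
end
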